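/- Scission for a matrix of generic full rank: Let A ∈ k[[x]]^{n×n} be a matrix of formal power series with det A ≠ 0, and let ℓ : k[[x]]^n → k[[x]]^n be the k[[x]]-linear map z ↦ A·z. Then there exists a k-linear map σ : k[[x]]^n → k[[x]]^n which is a scission of ℓ, i.e. ℓ∘σ∘ℓ = ℓ, and which satisfies ord(σ(z) − σ(w)) ≥ ord(z − w) − ord(det A) for all z, w ∈ k[[x]]^n. -/

import Mathlib

/- Scission for a matrix of generic full rank. -/

noncomputable section

open MvPowerSeries

/-- The order of a vector of power series: the minimum of the orders of the components. -/
def ordV {k : Type} [Field k] {n m : ℕ} (c : Fin m → MvPowerSeries (Fin n) k) : ℕ∞ :=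
  ⨅ i, MvPowerSeries.order (c i)

/-!
Take `σ := δ ∘ adj A`, where `δ` is a `k`-linear left inverse of multiplication by `d := det A`
with `ord (δ f) ≥ ord f - ord d`; then `adj A · A = d` gives the scission property and the
adjugate does not lower orders. With `e := ord d` and `d_e` the initial form of `d`, `δ` divides
by `d` degree by degree: the degree `j` part of the quotient is obtained from the degree `e + j`
part of the remainder `f - d · (quotient so far)` by a fixed `k`-linear left inverse `ψ` of
multiplication by `d_e`. For `f = d g` that remainder is `d (g - g_{<j})`, whose degree `e + j`
part is `d_e g_j`, so `g` is recovered; and no term of degree `< ord f - e` is ever produced.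
-/

theorem ENat.le_add_of_forall_natCast_add_le {a b : ℕ∞} {e : ℕ}
    (h : ∀ t : ℕ, (t + e : ℕ∞) ≤ a → (t : ℕ∞) ≤ b) : a ≤ b + e := by
  by_contra! hlt
  lift b to ℕ using ne_top_of_lt (lt_of_le_of_lt le_self_add hlt)
  have hsucc : ((b + 1 : ℕ) + e : ℕ∞) ≤ a := by
    rw [← Nat.cast_add, Nat.add_right_comm, Nat.cast_succ]
    exact Order.add_one_le_of_lt (mod_cast hlt)
  exact absurd (h _ hsucc) (by norm_cast; omega)

namespace MvPowerSeries

variable {σ k : Type*}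

theorem le_order_sum [Semiring k] {ι : Type*} {s : Finset ι} {f : ι → MvPowerSeries σ k}
    {a : ℕ∞} (h : ∀ i ∈ s, a ≤ (f i).order) : a ≤ (∑ i ∈ s, f i).order :=
  le_order fun m hm => by
    rw [map_sum]
    exact Finset.sum_eq_zero fun i hi => coeff_of_lt_order (hm.trans_le (h i hi))

theorem coeff_sub_sum_homogeneousComponent [CommRing k] (g : MvPowerSeries σ k) (j : ℕ)
    (m : σ →₀ ℕ) :
    coeff m (g - ∑ i ∈ Finset.range j, homogeneousComponent i g) =
      if m.degree < j then 0 else coeff m g := by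
  simp only [map_sub, map_sum, coeff_homogeneousComponent, Finset.sum_ite_eq,
    Finset.mem_range]
  split_ifs <;> simp

theorem homogeneousComponent_mul_sub_sum_homogeneousComponent [CommRing k]
    {d : MvPowerSeries σ k} {e : ℕ} (hd : e ≤ d.order) (g : MvPowerSeries σ k) (j : ℕ) :
    homogeneousComponent (e + j) (d * (g - ∑ i ∈ Finset.range j, homogeneousComponent i g)) =
      homogeneousComponent e d * homogeneousComponent j g := by
  have htail : (j : ℕ∞) ≤ (g - ∑ i ∈ Finset.range j, homogeneousComponent i g).order :=
    nat_le_order fun m hm => by rw [coeff_sub_sum_homogeneousComponent, if_pos hm]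
  rw [homogeneousComponent_mul_of_le_order hd htail]
  congr 1
  ext m
  simp only [coeff_homogeneousComponent, coeff_sub_sum_homogeneousComponent]
  split_ifs <;> first | rfl | omega

theorem homogeneousComponent_homogeneousComponent_self [CommSemiring k] (j : ℕ)
    (g : MvPowerSeries σ k) :
    homogeneousComponent j (homogeneousComponent j g) = homogeneousComponent j g := by
  ext m
  simp only [coeff_homogeneousComponent]
  split_ifs <;> rfl

section DivisionByInitialForm

variable [Field k] (ψ : MvPowerSeries σ k →ₗ[k] MvPowerSeries σ k) (d : MvPowerSeries σ k)
  (e : ℕ)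

/-- `partialQuotient ψ d e j f` is the part of degree `< j` of the quotient of `f` by `d`, where
`e = ord d` and `ψ` divides by the initial form `homogeneousComponent e d`. -/
def partialQuotient : ℕ → MvPowerSeries σ k →ₗ[k] MvPowerSeries σ k
  | 0 => 0
  | j + 1 => partialQuotient j + homogeneousComponent j ∘ₗ ψ ∘ₗ homogeneousComponent (e + j) ∘ₗ
      (LinearMap.id - LinearMap.mulLeft k d ∘ₗ partialQuotient j)

/-- The quotient of `f` by `d`: its coefficient of degree `m` is that of
`partialQuotient ψ d e j f` for any `j > deg m`. -/
def quotient : MvPowerSeries σ k →ₗ[k] MvPowerSeries σ k :=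
  LinearMap.pi fun m => coeff m ∘ₗ partialQuotient ψ d e (m.degree + 1)

theorem coeff_quotient (f : MvPowerSeries σ k) (m : σ →₀ ℕ) :
    coeff m (quotient ψ d e f) = coeff m (partialQuotient ψ d e (m.degree + 1) f) :=
  rfl

variable {ψ d e}

theorem partialQuotient_mul
    (hψ : ψ ∘ₗ LinearMap.mulLeft k (homogeneousComponent e d) = LinearMap.id)
    (hd : e ≤ d.order) (g : MvPowerSeries σ k) (j : ℕ) :
    partialQuotient ψ d e j (d * g) = ∑ i ∈ Finset.range j, homogeneousComponent i g := by
  induction j with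
  | zero => rfl
  | succ j ih =>
    have hdiv := LinearMap.congr_fun hψ (homogeneousComponent j g)
    simp only [LinearMap.comp_apply, LinearMap.mulLeft_apply, LinearMap.id_apply] at hdiv
    simp only [partialQuotient, LinearMap.add_apply, LinearMap.comp_apply, LinearMap.sub_apply,
      LinearMap.id_apply, LinearMap.mulLeft_apply, ih, ← mul_sub,
      homogeneousComponent_mul_sub_sum_homogeneousComponent hd, hdiv,
      homogeneousComponent_homogeneousComponent_self, Finset.sum_range_succ]

theorem quotient_mul
    (hψ : ψ ∘ₗ LinearMap.mulLeft k (homogeneousComponent e d) = LinearMap.id)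
    (hd : e ≤ d.order) (g : MvPowerSeries σ k) : quotient ψ d e (d * g) = g := by
  ext m
  rw [coeff_quotient, partialQuotient_mul hψ hd, Finset.sum_range_succ, map_add,
    coeff_homogeneousComponent, if_pos rfl, map_sum, add_eq_right]
  exact Finset.sum_eq_zero fun i hi => by
    rw [coeff_homogeneousComponent, if_neg (Finset.mem_range.mp hi).ne']

theorem partialQuotient_eq_zero {f : MvPowerSeries σ k} {j : ℕ} (hf : (e + j : ℕ∞) ≤ f.order) :
    partialQuotient ψ d e j f = 0 := by
  induction j with
  | zero => rfl
  | succ j ih =>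
    have hj : ((e + j : ℕ) : ℕ∞) < f.order := lt_of_lt_of_le (by norm_cast; omega) hf
    simp only [partialQuotient, LinearMap.add_apply, LinearMap.comp_apply, LinearMap.sub_apply,
      LinearMap.id_apply, ih (le_trans (by gcongr; simp) hf), sub_zero,
      homogeneousComponent_of_lt_order_eq_zero hj, map_zero, add_zero]

theorem order_le_order_quotient_add (f : MvPowerSeries σ k) :
    f.order ≤ (quotient ψ d e f).order + e :=
  ENat.le_add_of_forall_natCast_add_le fun t ht => nat_le_order fun m hm => by
    rw [coeff_quotient, partialQuotient_eq_zero, map_zero]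
    exact le_trans (by rw [add_comm]; exact_mod_cast Nat.add_le_add_right hm e) ht

end DivisionByInitialForm

theorem exists_linearMap_leftInverse_mul_order_le [Field k] {d : MvPowerSeries σ k}
    (hd : d ≠ 0) :
    ∃ δ : MvPowerSeries σ k →ₗ[k] MvPowerSeries σ k,
      (∀ g, δ (d * g) = g) ∧ ∀ f, f.order ≤ (δ f).order + d.order := by
  obtain ⟨e, he⟩ : ∃ e : ℕ, (e : ℕ∞) = d.order := ENat.ne_top_iff_exists.mp (by simpa)
  have hinj : LinearMap.ker (LinearMap.mulLeft k (homogeneousComponent e d)) = ⊥ :=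
    LinearMap.ker_eq_bot.mpr fun _ _ => mul_left_cancel₀ (homogeneousComponent_of_order he)
  obtain ⟨ψ, hψ⟩ := LinearMap.exists_leftInverse_of_injective _ hinj
  exact ⟨quotient ψ d e, quotient_mul hψ he.le, he ▸ order_le_order_quotient_add⟩

end MvPowerSeries

section OrderOfVectors

variable {k : Type} [Field k] {n m : ℕ}

theorem ordV_le_ordV_mulVec {p : ℕ} (M : Matrix (Fin p) (Fin m) (MvPowerSeries (Fin n) k))
    (u : Fin m → MvPowerSeries (Fin n) k) : ordV u ≤ ordV (M.mulVec u) :=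
  le_iInf fun i => le_order_sum (s := Finset.univ) (f := fun j => M i j * u j)
    fun j _ => (iInf_le _ j).trans (le_add_self.trans le_order_mul)

theorem ordV_le_ordV_compLeft_add {c : ℕ∞}
    {δ : MvPowerSeries (Fin n) k →ₗ[k] MvPowerSeries (Fin n) k}
    (hδ : ∀ f, f.order ≤ (δ f).order + c) (u : Fin m → MvPowerSeries (Fin n) k) :
    ordV u ≤ ordV (δ.compLeft (Fin m) u) + c := by
  rw [ordV, ordV, ENat.iInf_add]
  exact le_iInf fun i => (iInf_le _ i).trans (hδ (u i))

end OrderOfVectors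

theorem scission_generic_full_rank_general
    {k : Type} [Field k] {n : ℕ}
    (A : Matrix (Fin n) (Fin n) (MvPowerSeries (Fin n) k))
    (hdet : A.det ≠ 0) :
    ∃ σ : (Fin n → MvPowerSeries (Fin n) k) →ₗ[k] (Fin n → MvPowerSeries (Fin n) k),
      (∀ z, A.mulVec (σ (A.mulVec z)) = A.mulVec z) ∧
      (∀ z w, ordV (z - w) ≤ ordV (σ z - σ w) + MvPowerSeries.order A.det) := by
  obtain ⟨δ, hδ_mul, hδ_order⟩ := exists_linearMap_leftInverse_mul_order_le hdet
  let σ := δ.compLeft (Fin n) ∘ₗ A.adjugate.mulVecLin.restrictScalars k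
  have hσ : ∀ z, σ (A.mulVec z) = z := fun z => funext fun i => by
    change δ (A.adjugate.mulVec (A.mulVec z) i) = z i
    rw [Matrix.mulVec_mulVec, Matrix.adjugate_mul, Matrix.smul_mulVec, Matrix.one_mulVec,
      Pi.smul_apply, smul_eq_mul, hδ_mul]
  refine ⟨σ, fun z => by rw [hσ], fun z w => ?_⟩
  rw [← map_sub]
  exact (ordV_le_ordV_mulVec A.adjugate (z - w)).trans (ordV_le_ordV_compLeft_add hδ_order _)

/-- **Scission for a matrix of generic full rank.**
Let `A ∈ k[[x]]^{n×n}` with `det A ≠ 0` and let `ℓ : z ↦ A·z`. Then there is a `k`-linear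
scission `σ` of `ℓ` (i.e. `ℓ∘σ∘ℓ = ℓ`) with
`ord(σ z − σ w) ≥ ord(z − w) − ord(det A)` for all `z, w`. -/
theorem scission_generic_full_rank
    {k : Type} [Field k] [CharZero k] {n : ℕ}
    (A : Matrix (Fin n) (Fin n) (MvPowerSeries (Fin n) k))
    (hdet : A.det ≠ 0) :
    ∃ σ : (Fin n → MvPowerSeries (Fin n) k) →ₗ[k] (Fin n → MvPowerSeries (Fin n) k),
      (∀ z, A.mulVec (σ (A.mulVec z)) = A.mulVec z) ∧
      (∀ z w, ordV (z - w) ≤ ordV (σ z - σ w) + MvPowerSeries.order A.det) :=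
  scission_generic_full_rank_general A hdet
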